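/- For every v ∈ (0,1) there exist constants c₁, c₂ > 0 (possibly depending on v) such that for every m₀ ≥ 1, the probability of the event {for all real m ≥ m₀: N((1+v)m) − N(m) < 2vm, and (1−v)m < N(m) < (1+v)m} is at least 1 − c₁·exp(−c₂·v·m₀). -/

import Mathlib

open MeasureTheory ENNReal ProbabilityTheory

noncomputable section

/-- `S k ω = ξ_1(ω) + … + ξ_k(ω)`: partial sums of the sequence `ξ` (indexed from `0`). -/
def partialSum {Ω : Type*} (ξ : ℕ → Ω → ℝ) (k : ℕ) (ω : Ω) : ℝ :=
  ∑ i ∈ Finset.range k, ξ i ω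

/-!
Since the mgf of a standard exponential is `1 / (1 - t)`, Chernoff bounds give
`P(|S_n - n| ≥ w n) ≤ 2 e^{-ρ n}` for some `ρ = ρ(w) > 0`, and a union bound shows that with
probability at least `1 - C e^{-ρ k₀}` every `S_n` with `n ≥ k₀` lies within relative error `w`
of `n`. Take `w = v / 16` and `k₀ = ⌈v m₀ / 16⌉`. On that event, as `S` is nondecreasing,
inverting the bounds gives `m / (1 + w) - k₀ < N(m) < m / (1 - w) + 1` and
`N((1 + v) m) - N(m) < (1 + v) m / (1 - w) - m / (1 + w) + 1` for every `m ≥ m₀`; when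
`v m ≥ 4` these are the three claimed inequalities, and `v m₀ < 4` is absorbed into `c₁`.
-/

open Real Set

lemma partialSum_eq_sum {Ω : Type*} (ξ : ℕ → Ω → ℝ) (n : ℕ) :
    partialSum ξ n = ∑ i ∈ Finset.range n, ξ i := by
  funext ω
  simp [partialSum]

lemma monotone_partialSum {Ω : Type*} {ξ : ℕ → Ω → ℝ} {ω : Ω} (h : ∀ i, 0 ≤ ξ i ω) :
    Monotone (partialSum ξ · ω) :=
  monotone_nat_of_le_succ fun n ↦ by simp [partialSum, Finset.sum_range_succ, h n]

namespace Set

lemma encard_lt_ofReal_of_forall_mem {s : Set ℕ} {x y : ℝ} (hx : 0 ≤ x) (hxy : x ≤ y)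
    (hs : ∀ k ∈ s, x < k ∧ (k : ℝ) ≤ y) : (s.encard : ℝ≥0∞) < ENNReal.ofReal (y - x + 1) := by
  have hsub : s ⊆ Finset.Ioc ⌊x⌋₊ ⌊y⌋₊ := fun k hk ↦ by
    simpa using ⟨(Nat.floor_lt hx).mpr (hs k hk).1, Nat.le_floor (hs k hk).2⟩
  calc (s.encard : ℝ≥0∞) ≤ (Finset.Ioc ⌊x⌋₊ ⌊y⌋₊).card := by
        simpa using ENat.toENNReal_le.mpr ((encard_mono hsub).trans_eq
          (encard_coe_eq_coe_finsetCard _))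
    _ < ENNReal.ofReal (y - x + 1) := by
        rw [ENNReal.natCast_lt_ofReal, Nat.card_Ioc, Nat.cast_sub (Nat.floor_le_floor hxy)]
        linarith [Nat.floor_le (hx.trans hxy), Nat.sub_one_lt_floor x]

lemma ofReal_lt_encard_of_forall_mem {s : Set ℕ} {a : ℕ} {y : ℝ} (hay : (a : ℝ) ≤ y)
    (hs : ∀ k : ℕ, a ≤ k → (k : ℝ) ≤ y → k ∈ s) : ENNReal.ofReal (y - a) < s.encard := by
  have hsub : (Finset.Icc a ⌊y⌋₊ : Set ℕ) ⊆ s := fun k hk ↦ by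
    simp only [Finset.coe_Icc, mem_Icc] at hk
    exact hs k hk.1 ((Nat.le_floor_iff (le_trans (Nat.cast_nonneg a) hay)).mp hk.2)
  have haf : a ≤ ⌊y⌋₊ := Nat.le_floor hay
  calc ENNReal.ofReal (y - a) < (Finset.Icc a ⌊y⌋₊).card := by
        rw [← ENNReal.ofReal_natCast, ENNReal.ofReal_lt_ofReal_iff (by simpa using haf),
          Nat.card_Icc, Nat.cast_sub (by omega)]
        push_cast
        linarith [Nat.lt_floor_add_one y]
    _ ≤ s.encard := by
        simpa using ENat.toENNReal_le.mpr ((encard_coe_eq_coe_finsetCard _).symm.trans_le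
          (encard_mono hsub))

end Set

def IsNearLinearFrom (S : ℕ → ℝ) (w : ℝ) (k₀ : ℕ) : Prop :=
  ∀ k, k₀ ≤ k → (1 - w) * k < S k ∧ S k < (1 + w) * k

namespace IsNearLinearFrom

variable {S : ℕ → ℝ} {w m M : ℝ} {k₀ : ℕ}

lemma natCast_le_div (hS : IsNearLinearFrom S w k₀) (hw : w < 1)
    (hk₀ : (k₀ : ℝ) ≤ M / (1 - w)) {k : ℕ} (hk : S k ≤ M) : (k : ℝ) ≤ M / (1 - w) := by
  rcases lt_or_ge k k₀ with hkk₀ | hkk₀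
  · exact le_trans (by exact_mod_cast hkk₀.le) hk₀
  · rw [le_div_iff₀ (by linarith), mul_comm]
    linarith [(hS k hkk₀).1]

lemma div_lt_natCast (hS : IsNearLinearFrom S w k₀) (hmono : Monotone S) (hw : -1 < w)
    (hk₀ : (1 + w) * k₀ ≤ m) {k : ℕ} (hk : m < S k) : m / (1 + w) < k := by
  rw [div_lt_iff₀ (by linarith), mul_comm]
  by_contra! hkm
  rcases lt_or_ge k k₀ with hkk₀ | hkk₀
  · linarith [hmono hkk₀.le, (hS k₀ le_rfl).2]
  · linarith [(hS k hkk₀).2]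

lemma encard_le_lt (hS : IsNearLinearFrom S w k₀) (hw : w < 1)
    (hk₀ : (k₀ : ℝ) ≤ m / (1 - w)) :
    ({k | 1 ≤ k ∧ S k ≤ m}.encard : ℝ≥0∞) < ENNReal.ofReal (m / (1 - w) + 1) := by
  simpa using encard_lt_ofReal_of_forall_mem le_rfl ((Nat.cast_nonneg k₀).trans hk₀)
    fun k hk ↦ ⟨by exact_mod_cast hk.1, hS.natCast_le_div hw hk₀ hk.2⟩

lemma ofReal_lt_encard_le (hS : IsNearLinearFrom S w k₀) (hw : -1 < w) (hk₀1 : 1 ≤ k₀)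
    (hk₀ : (k₀ : ℝ) ≤ m / (1 + w)) :
    ENNReal.ofReal (m / (1 + w) - k₀) < {k | 1 ≤ k ∧ S k ≤ m}.encard :=
  ofReal_lt_encard_of_forall_mem hk₀ fun k hk hkm ↦ ⟨hk₀1.trans hk, by
    have := (hS k hk).2
    rw [le_div_iff₀ (by linarith)] at hkm
    linarith⟩

lemma encard_Ioc_lt (hS : IsNearLinearFrom S w k₀) (hmono : Monotone S) (hw0 : -1 < w)
    (hw1 : w < 1) (hmM : m / (1 + w) ≤ M / (1 - w)) (hk₀m : (1 + w) * k₀ ≤ m)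
    (hk₀M : (k₀ : ℝ) ≤ M / (1 - w)) :
    ({k | 1 ≤ k ∧ m < S k ∧ S k ≤ M}.encard : ℝ≥0∞)
      < ENNReal.ofReal (M / (1 - w) - m / (1 + w) + 1) := by
  have hm : 0 ≤ m / (1 + w) :=
    div_nonneg (le_trans (mul_nonneg (by linarith) (Nat.cast_nonneg k₀)) hk₀m) (by linarith)
  exact encard_lt_ofReal_of_forall_mem hm hmM fun k hk ↦
    ⟨hS.div_lt_natCast hmono hw0 hk₀m hk.2.1, hS.natCast_le_div hw1 hk₀M hk.2.2⟩

lemma encard_bounds {v : ℝ} (hS : IsNearLinearFrom S (v / 16) k₀) (hmono : Monotone S)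
    (hv0 : 0 < v) (hv1 : v < 1) (hvm : 4 ≤ v * m) (hk₀1 : 1 ≤ k₀)
    (hk₀ : (k₀ : ℝ) ≤ v * m / 16 + 1) :
    ({k | 1 ≤ k ∧ m < S k ∧ S k ≤ (1 + v) * m}.encard : ℝ≥0∞) < ENNReal.ofReal (2 * v * m) ∧
    ENNReal.ofReal ((1 - v) * m) < {k | 1 ≤ k ∧ S k ≤ m}.encard ∧
    ({k | 1 ≤ k ∧ S k ≤ m}.encard : ℝ≥0∞) < ENNReal.ofReal ((1 + v) * m) := by
  set w := v / 16 with hw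
  have hm : 0 < m := pos_of_mul_pos_right (by linarith) hv0.le
  have hvm' : v * m ≤ m := by nlinarith
  have hw0 : 0 < w := by positivity
  have hw1 : w < 1 := by linarith
  have hdiv_sub {X : ℝ} (hX : 0 ≤ X) : X / (1 - w) ≤ (1 + 2 * w) * X := by
    rw [div_le_iff₀ (by linarith)]
    nlinarith [mul_nonneg (mul_nonneg hw0.le hX) (by linarith : 0 ≤ 1 - 2 * w)]
  have hdiv_add : (1 - w) * m ≤ m / (1 + w) := by
    rw [le_div_iff₀ (by linarith)]
    nlinarith [mul_nonneg (sq_nonneg w) hm.le]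
  have hm_sub : m ≤ m / (1 - w) := le_div_self hm.le (by linarith) (by linarith)
  have hm_add : m / (1 + w) ≤ m := div_le_self hm.le (by linarith)
  have hmM : m / (1 - w) ≤ (1 + v) * m / (1 - w) := by gcongr; linarith
  have hk₀m : (k₀ : ℝ) ≤ m / (1 - w) := by linarith
  refine ⟨?_, ?_, ?_⟩
  · refine (hS.encard_Ioc_lt hmono (by linarith) hw1 (by linarith) (by nlinarith)
      (by linarith)).trans_le (ENNReal.ofReal_le_ofReal ?_)
    nlinarith [hdiv_sub (X := (1 + v) * m) (by positivity)]
  · refine (ENNReal.ofReal_le_ofReal ?_).trans_lt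
      (hS.ofReal_lt_encard_le (by linarith) hk₀1 (by nlinarith))
    nlinarith
  · refine (hS.encard_le_lt hw1 hk₀m).trans_le (ENNReal.ofReal_le_ofReal ?_)
    nlinarith [hdiv_sub hm.le]

end IsNearLinearFrom

namespace MeasureTheory

variable {Ω : Type*} [MeasurableSpace Ω] {μ : Measure Ω}

lemma measure_biUnion_ge_le_of_le_geometric {A : ℕ → Set Ω} {C q : ℝ} (hC : 0 ≤ C)
    (hq0 : 0 ≤ q) (hq1 : q < 1) (hA : ∀ n, μ (A n) ≤ ENNReal.ofReal (C * q ^ n)) (k₀ : ℕ) :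
    μ (⋃ n ≥ k₀, A n) ≤ ENNReal.ofReal (C * q ^ k₀ / (1 - q)) := by
  have hsum := (summable_geometric_of_lt_one hq0 hq1).mul_left (C * q ^ k₀)
  calc μ (⋃ n ≥ k₀, A n) ≤ ∑' j, μ (A (j + k₀)) := by
        rw [iUnion_ge_eq_iUnion_nat_add]
        exact measure_iUnion_le _
    _ ≤ ∑' j, ENNReal.ofReal (C * q ^ k₀ * q ^ j) :=
        ENNReal.tsum_le_tsum fun j ↦
          (hA _).trans_eq (by rw [pow_add, mul_comm (q ^ j), mul_assoc])
    _ = ENNReal.ofReal (C * q ^ k₀ / (1 - q)) := by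
        rw [← ENNReal.ofReal_tsum_of_nonneg (fun j ↦ by positivity) hsum, tsum_mul_left,
          tsum_geometric_of_lt_one hq0 hq1, div_eq_mul_inv]

lemma ofReal_one_sub_le_measure [IsProbabilityMeasure μ] {s t : Set Ω} {b : ℝ} (hb : 0 ≤ b)
    (hs : μ s ≤ ENNReal.ofReal b) (hst : sᶜ ⊆ t) : ENNReal.ofReal (1 - b) ≤ μ t := by
  have hcover : 1 ≤ μ s + μ t := by
    rw [← measure_univ (μ := μ), ← compl_subset_iff_union.mp hst]
    exact measure_union_le s t
  calc ENNReal.ofReal (1 - b) = 1 - ENNReal.ofReal b := by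
        rw [ENNReal.ofReal_sub _ hb, ofReal_one]
    _ ≤ 1 - μ s := tsub_le_tsub_left hs 1
    _ ≤ μ t := tsub_le_iff_left.mpr hcover

end MeasureTheory

namespace ProbabilityTheory

section ExponentialLaw

variable {r t : ℝ}

lemma lintegral_exp_mul_expMeasure (hr : 0 < r) (ht : t < r) :
    ∫⁻ x, ENNReal.ofReal (exp (t * x)) ∂expMeasure r = ENNReal.ofReal (r / (r - t)) := by
  have hrt : 0 < r - t := sub_pos.mpr ht
  have htilt : ∀ x, exponentialPDF r x * ENNReal.ofReal (exp (t * x))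
      = ENNReal.ofReal (r / (r - t)) * exponentialPDF (r - t) x := by
    intro x
    rcases lt_or_ge x 0 with hx | hx
    · simp [exponentialPDF_of_neg hx]
    rw [exponentialPDF_of_nonneg hx, exponentialPDF_of_nonneg hx,
      ← ENNReal.ofReal_mul (by positivity), ← ENNReal.ofReal_mul (by positivity)]
    congr 1
    rw [mul_assoc, ← exp_add]
    field_simp
    ring_nf
  have hpdf : Measurable (gammaPDF 1 r) := (measurable_gammaPDFReal 1 r).ennreal_ofReal
  have hpdf' : Measurable (exponentialPDF (r - t)) :=
    (measurable_exponentialPDFReal _).ennreal_ofReal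
  rw [expMeasure, gammaMeasure, lintegral_withDensity_eq_lintegral_mul _ hpdf (by fun_prop)]
  simp only [Pi.mul_apply, show gammaPDF 1 r = exponentialPDF r from rfl, htilt]
  rw [lintegral_const_mul _ hpdf', lintegral_exponentialPDF_eq_one hrt, mul_one]

lemma integrable_exp_mul_expMeasure (hr : 0 < r) (ht : t < r) :
    Integrable (fun x ↦ exp (t * x)) (expMeasure r) := by
  refine ⟨by fun_prop, ?_⟩
  rw [hasFiniteIntegral_iff_ofReal (ae_of_all _ fun x ↦ (exp_pos _).le),
    lintegral_exp_mul_expMeasure hr ht]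
  exact ENNReal.ofReal_lt_top

lemma mgf_id_expMeasure (hr : 0 < r) (ht : t < r) : mgf id (expMeasure r) t = r / (r - t) := by
  rw [mgf, integral_eq_lintegral_of_nonneg_ae (ae_of_all _ fun x ↦ (exp_pos _).le) (by fun_prop)]
  simp only [id, lintegral_exp_mul_expMeasure hr ht]
  exact ENNReal.toReal_ofReal (div_pos hr (sub_pos.mpr ht)).le

variable {Ω : Type*} [MeasurableSpace Ω] {μ : Measure Ω} {X : Ω → ℝ}

lemma map_eq_expMeasure_of_cdf [IsProbabilityMeasure μ] (hX : Measurable X) (hr : 0 < r)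
    (hcdf : ∀ t, 0 ≤ t → μ {ω | X ω ≤ t} = ENNReal.ofReal (1 - exp (-(r * t)))) :
    μ.map X = expMeasure r := by
  have := Measure.isProbabilityMeasure_map (μ := μ) hX.aemeasurable
  have := isProbabilityMeasure_expMeasure hr
  refine Measure.eq_of_cdf _ _ (StieltjesFunction.ext fun t ↦ ?_)
  rw [cdf_eq_real, cdf_expMeasure_eq hr, map_measureReal_apply hX measurableSet_Iic,
    measureReal_def]
  change (μ {ω | X ω ≤ t}).toReal = _
  split_ifs with ht
  · rw [hcdf t ht, ENNReal.toReal_ofReal]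
    simpa using mul_nonneg hr.le ht
  · have hneg : μ {ω | X ω ≤ 0} = 0 := by simpa using hcdf 0 le_rfl
    have hsub : {ω | X ω ≤ t} ⊆ {ω | X ω ≤ 0} := fun ω hω ↦ le_trans hω (not_le.mp ht).le
    rw [measure_mono_null hsub hneg, ENNReal.toReal_zero]

lemma integrable_exp_mul_of_map_eq_expMeasure (hX : Measurable X) (hlaw : μ.map X = expMeasure r)
    (hr : 0 < r) (ht : t < r) : Integrable (fun ω ↦ exp (t * X ω)) μ := by
  have h := integrable_exp_mul_expMeasure hr ht
  rw [← hlaw] at h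
  exact h.comp_measurable hX

lemma mgf_of_map_eq_expMeasure (hX : Measurable X) (hlaw : μ.map X = expMeasure r)
    (hr : 0 < r) (ht : t < r) : mgf X μ t = r / (r - t) := by
  rw [← mgf_id_map hX.aemeasurable, hlaw, mgf_id_expMeasure hr ht]

end ExponentialLaw

section ExponentialSums

variable {Ω : Type*} [MeasurableSpace Ω] {μ : Measure Ω} {ξ : ℕ → Ω → ℝ} {t w : ℝ}

lemma integrable_exp_mul_partialSum (hmeas : ∀ i, Measurable (ξ i)) (hind : iIndepFun ξ μ)
    (hlaw : ∀ i, μ.map (ξ i) = expMeasure 1) (ht : t < 1) (n : ℕ) :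
    Integrable (fun ω ↦ exp (t * partialSum ξ n ω)) μ := by
  have := hind.isProbabilityMeasure
  rw [partialSum_eq_sum]
  exact hind.integrable_exp_mul_sum hmeas fun i _ ↦
    integrable_exp_mul_of_map_eq_expMeasure (hmeas i) (hlaw i) one_pos ht

lemma mgf_partialSum (hmeas : ∀ i, Measurable (ξ i)) (hind : iIndepFun ξ μ)
    (hlaw : ∀ i, μ.map (ξ i) = expMeasure 1) (ht : t < 1) (n : ℕ) :
    mgf (partialSum ξ n) μ t = (1 - t)⁻¹ ^ n := by
  rw [partialSum_eq_sum, hind.mgf_sum hmeas, Finset.prod_congr rfl fun i _ ↦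
    mgf_of_map_eq_expMeasure (hmeas i) (hlaw i) one_pos ht, Finset.prod_const,
    Finset.card_range, one_div]

lemma measureReal_partialSum_ge_le (hmeas : ∀ i, Measurable (ξ i)) (hind : iIndepFun ξ μ)
    (hlaw : ∀ i, μ.map (ξ i) = expMeasure 1) (hw : 0 ≤ w) (n : ℕ) :
    μ.real {ω | (1 + w) * n ≤ partialSum ξ n ω} ≤ exp (-(w - Real.log (1 + w)) * n) := by
  have := hind.isProbabilityMeasure
  have hw1 : 0 < 1 + w := by linarith
  -- the optimal Chernoff parameter
  set t := w / (1 + w) with ht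
  have ht1 : t < 1 := (div_lt_one hw1).mpr (by linarith)
  have h1t : (1 - t)⁻¹ = 1 + w := by
    rw [ht, one_sub_div hw1.ne', add_sub_cancel_right, inv_div, div_one]
  calc μ.real {ω | (1 + w) * n ≤ partialSum ξ n ω}
      ≤ exp (-t * ((1 + w) * n)) * mgf (partialSum ξ n) μ t :=
        measure_ge_le_exp_mul_mgf _ (by positivity)
          (integrable_exp_mul_partialSum hmeas hind hlaw ht1 n)
    _ = exp (-w * n) * exp (Real.log (1 + w) * n) := by
        have hexp : -t * ((1 + w) * n) = -w * n := by rw [ht]; field_simp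
        rw [mgf_partialSum hmeas hind hlaw ht1, h1t, hexp, ← exp_log (pow_pos hw1 n),
          Real.log_pow, mul_comm (n : ℝ)]
    _ = exp (-(w - Real.log (1 + w)) * n) := by rw [← exp_add]; ring_nf

lemma measureReal_partialSum_le_le (hmeas : ∀ i, Measurable (ξ i)) (hind : iIndepFun ξ μ)
    (hlaw : ∀ i, μ.map (ξ i) = expMeasure 1) (hw : 0 ≤ w) (n : ℕ) :
    μ.real {ω | partialSum ξ n ω ≤ (1 - w) * n}
      ≤ exp (-(Real.log (1 + w) - w + w ^ 2) * n) := by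
  have := hind.isProbabilityMeasure
  have hw1 : 0 < 1 + w := by linarith
  have ht1 : -w < 1 := by linarith
  calc μ.real {ω | partialSum ξ n ω ≤ (1 - w) * n}
      ≤ exp (-(-w) * ((1 - w) * n)) * mgf (partialSum ξ n) μ (-w) :=
        measure_le_le_exp_mul_mgf _ (neg_nonpos.mpr hw)
          (integrable_exp_mul_partialSum hmeas hind hlaw ht1 n)
    _ = exp (w * (1 - w) * n) * exp (-Real.log (1 + w) * n) := by
        rw [mgf_partialSum hmeas hind hlaw ht1, sub_neg_eq_add,
          ← exp_log (pow_pos (inv_pos.mpr hw1) n), Real.log_pow, Real.log_inv]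
        ring_nf
    _ = exp (-(Real.log (1 + w) - w + w ^ 2) * n) := by rw [← exp_add]; ring_nf

end ExponentialSums

end ProbabilityTheory

/-- The smaller of the exponents that the Chernoff bounds give for the two tails
`S_n ≥ (1 + w) n` and `S_n ≤ (1 - w) n` of a sum of `n` standard exponentials (at `t = w / (1 + w)`
and `t = -w` respectively). -/
def deviationRate (w : ℝ) : ℝ := min (w - Real.log (1 + w)) (Real.log (1 + w) - w + w ^ 2)

lemma deviationRate_pos {w : ℝ} (hw : 0 < w) : 0 < deviationRate w := by
  have hw1 : 0 < 1 + w := by linarith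
  have hupper : Real.log (1 + w) < w := by
    linarith [log_lt_sub_one_of_pos hw1 (by linarith)]
  have hlower : w / (1 + w) < Real.log (1 + w) := by
    have h := log_lt_sub_one_of_pos (inv_pos.mpr hw1) (inv_ne_one.mpr (by linarith))
    rw [Real.log_inv] at h
    have : w / (1 + w) = 1 - (1 + w)⁻¹ := by field_simp; ring
    linarith
  have hquad : w - w ^ 2 < w / (1 + w) := by
    rw [lt_div_iff₀ hw1]
    nlinarith [pow_pos hw 3]
  exact lt_min (by linarith) (by linarith)

lemma ProbabilityTheory.measure_partialSum_deviation_le {Ω : Type*} [MeasurableSpace Ω]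
    {μ : Measure Ω} {ξ : ℕ → Ω → ℝ} (hmeas : ∀ i, Measurable (ξ i)) (hind : iIndepFun ξ μ)
    (hlaw : ∀ i, μ.map (ξ i) = expMeasure 1) {w : ℝ} (hw : 0 ≤ w) (n : ℕ) :
    μ {ω | ¬((1 - w) * n < partialSum ξ n ω ∧ partialSum ξ n ω < (1 + w) * n)}
      ≤ ENNReal.ofReal (2 * exp (-deviationRate w) ^ n) := by
  have := hind.isProbabilityMeasure
  have hrate : ∀ {I : ℝ}, deviationRate w ≤ I → exp (-I * n) ≤ exp (-deviationRate w) ^ n :=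
    fun hI ↦ by
      rw [← exp_nat_mul]
      exact exp_le_exp.mpr (by nlinarith [(Nat.cast_nonneg n : (0 : ℝ) ≤ n)])
  calc μ {ω | ¬((1 - w) * n < partialSum ξ n ω ∧ partialSum ξ n ω < (1 + w) * n)}
      ≤ μ ({ω | partialSum ξ n ω ≤ (1 - w) * n} ∪ {ω | (1 + w) * n ≤ partialSum ξ n ω}) :=
        measure_mono fun ω hω ↦ by
          simp only [mem_ofPred_eq, not_and_or, not_lt] at hω
          exact hω
    _ ≤ ENNReal.ofReal (μ.real {ω | partialSum ξ n ω ≤ (1 - w) * n})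
          + ENNReal.ofReal (μ.real {ω | (1 + w) * n ≤ partialSum ξ n ω}) := by
        rw [ofReal_measureReal, ofReal_measureReal]
        exact measure_union_le _ _
    _ ≤ ENNReal.ofReal (exp (-deviationRate w) ^ n)
          + ENNReal.ofReal (exp (-deviationRate w) ^ n) :=
        add_le_add
          (ENNReal.ofReal_le_ofReal ((measureReal_partialSum_le_le hmeas hind hlaw hw n).trans
            (hrate (min_le_right _ _))))
          (ENNReal.ofReal_le_ofReal ((measureReal_partialSum_ge_le hmeas hind hlaw hw n).trans
            (hrate (min_le_left _ _))))
    _ = ENNReal.ofReal (2 * exp (-deviationRate w) ^ n) := by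
        rw [← ENNReal.ofReal_add (by positivity) (by positivity), two_mul]

lemma ProbabilityTheory.ofReal_le_measure_isNearLinearFrom {Ω : Type*} [MeasurableSpace Ω]
    {μ : Measure Ω} {ξ : ℕ → Ω → ℝ} (hmeas : ∀ i, Measurable (ξ i)) (hind : iIndepFun ξ μ)
    (hcdf : ∀ i, ∀ t : ℝ, 0 ≤ t → μ {ω | ξ i ω ≤ t} = ENNReal.ofReal (1 - exp (-t)))
    {w : ℝ} (hw : 0 < w) (k₀ : ℕ) :
    ENNReal.ofReal (1 - 2 * exp (-deviationRate w) ^ k₀ / (1 - exp (-deviationRate w)))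
      ≤ μ {ω | Monotone (partialSum ξ · ω) ∧ IsNearLinearFrom (partialSum ξ · ω) w k₀} := by
  have := hind.isProbabilityMeasure
  have hq : exp (-deviationRate w) < 1 :=
    Real.exp_lt_one_iff.mpr (by linarith [deviationRate_pos hw])
  have hlaw i := map_eq_expMeasure_of_cdf (hmeas i) one_pos (by simpa using hcdf i)
  have hnull : μ {ω | ∃ i, ξ i ω < 0} = 0 := by
    rw [ofPred_exists]
    refine measure_iUnion_null fun i ↦ ?_
    have h0 : μ {ω | ξ i ω ≤ 0} = 0 := by simpa using hcdf i 0 le_rfl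
    exact measure_mono_null (fun ω (h : ξ i ω < 0) ↦ h.le) h0
  refine ofReal_one_sub_le_measure (div_nonneg (by positivity) (by linarith))
    (s := {ω | ∃ i, ξ i ω < 0} ∪ ⋃ n ≥ k₀,
      {ω | ¬((1 - w) * n < partialSum ξ n ω ∧ partialSum ξ n ω < (1 + w) * n)})
    ((measure_union_le _ _).trans ?_) fun ω hω ↦ ?_
  · rw [hnull, zero_add]
    exact measure_biUnion_ge_le_of_le_geometric zero_le_two (exp_pos _).le hq
      (measure_partialSum_deviation_le hmeas hind hlaw hw.le) k₀
  · simp only [mem_compl_iff, mem_union, mem_ofPred_eq, mem_iUnion, not_or, not_exists,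
      not_lt, not_not] at hω
    exact ⟨monotone_partialSum hω.1, hω.2⟩

/-- if `(ξ_k)` are i.i.d. mean-one exponentials, `S_k = ξ_1 + … + ξ_k`, and
`N(t) = #{k ≥ 1 : S_k ≤ t}` is the associated rate-one Poisson process, then for every
`v ∈ (0,1)` there are `c₁, c₂ > 0` such that for every `m₀ ≥ 1`,
`ℙ[∀ m ≥ m₀ :  N((1+v)m) − N(m) < 2vm  and  (1−v)m < N(m) < (1+v)m] ≥ 1 − c₁ e^{−c₂ v m₀}`.
Counts are expressed via `Set.encard` (so `N(b) − N(a) = #{k ≥ 1 : a < S_k ≤ b}`). -/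
theorem poisson_process_regularity (v : ℝ) (hv0 : 0 < v) (hv1 : v < 1) :
    ∃ c₁ > (0 : ℝ), ∃ c₂ > (0 : ℝ),
      ∀ (Ω : Type) (_ : MeasurableSpace Ω) (μ : Measure Ω), IsProbabilityMeasure μ →
        ∀ ξ : ℕ → Ω → ℝ, (∀ k, Measurable (ξ k)) →
          iIndepFun ξ μ →
          (∀ k, ∀ t : ℝ, 0 ≤ t → μ {ω | ξ k ω ≤ t} = ENNReal.ofReal (1 - Real.exp (-t))) →
          ∀ m₀ : ℝ, 1 ≤ m₀ →
            ENNReal.ofReal (1 - c₁ * Real.exp (-c₂ * v * m₀))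
              ≤ μ {ω | ∀ m : ℝ, m₀ ≤ m →
                  (({k : ℕ | 1 ≤ k ∧ m < partialSum ξ k ω ∧
                      partialSum ξ k ω ≤ (1 + v) * m} : Set ℕ).encard : ℝ≥0∞)
                    < ENNReal.ofReal (2 * v * m) ∧
                  ENNReal.ofReal ((1 - v) * m)
                    < (({k : ℕ | 1 ≤ k ∧ partialSum ξ k ω ≤ m} : Set ℕ).encard : ℝ≥0∞) ∧
                  (({k : ℕ | 1 ≤ k ∧ partialSum ξ k ω ≤ m} : Set ℕ).encard : ℝ≥0∞)
                    < ENNReal.ofReal ((1 + v) * m)} := by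
  set ρ := deviationRate (v / 16)
  have hρ : 0 < ρ := deviationRate_pos (by positivity)
  have hq : exp (-ρ) < 1 := Real.exp_lt_one_iff.mpr (by linarith)
  set C := 2 / (1 - exp (-ρ))
  have hC : 1 ≤ C := (one_le_div (by linarith)).mpr (by linarith [exp_pos (-ρ)])
  refine ⟨C * exp (ρ / 4), by positivity, ρ / 16, by positivity, ?_⟩
  intro Ω _ μ _ ξ hmeas hind hcdf m₀ _
  rcases lt_or_ge (v * m₀) 4 with hsmall | hlarge
  · -- the factor `exp (ρ / 4)` in `c₁` makes the bound vacuous when `v m₀ < 4`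
    refine le_of_eq_of_le (ENNReal.ofReal_eq_zero.mpr (sub_nonpos.mpr ?_)) zero_le
    rw [mul_assoc, ← exp_add]
    nlinarith [one_le_exp (x := ρ / 4 + -(ρ / 16) * v * m₀) (by nlinarith)]
  set k₀ := ⌈v * m₀ / 16⌉₊
  have hk₀ : v * m₀ / 16 ≤ k₀ := Nat.le_ceil _
  have hbound :
      2 * exp (-ρ) ^ k₀ / (1 - exp (-ρ)) ≤ C * exp (ρ / 4) * exp (-(ρ / 16) * v * m₀) :=
    calc 2 * exp (-ρ) ^ k₀ / (1 - exp (-ρ)) = C * exp (-ρ * k₀) := by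
          simp only [C]
          rw [← exp_nat_mul]
          ring_nf
      _ ≤ C * exp (ρ / 4) * exp (-(ρ / 16) * v * m₀) := by
          rw [mul_assoc, ← exp_add]
          gcongr
          nlinarith
  refine (ENNReal.ofReal_le_ofReal (sub_le_sub_left hbound 1)).trans
    ((ofReal_le_measure_isNearLinearFrom hmeas hind hcdf (by positivity) k₀).trans
      (measure_mono ?_))
  rintro ω ⟨hmono, hnear⟩ m hm
  have hvm : v * m₀ ≤ v * m := mul_le_mul_of_nonneg_left hm hv0.le
  exact hnear.encard_bounds hmono hv0 hv1 (by linarith) (Nat.one_le_ceil_iff.mpr (by positivity))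
    (by linarith [Nat.ceil_lt_add_one (by positivity : 0 ≤ v * m₀ / 16)])

end
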